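/- arXiv:1707.07456 — 2 statements merged into one kernel-verified Lean document; each statement's English description precedes it below -/
import Mathlib

section
/- Let A ⊆ ℝⁿ be a compact set that is a tubular neighborhood, i.e. A = B(K, r) for some closed set K ⊆ A and r > 0. Then for every boundary point x ∈ ∂A and every sufficiently small s > 0, there exists a closed ball of radius s/2 contained in A and containing x, and consequently the n-dimensional lower density of A at x satisfies Θⁿ(A, x) ≥ 2^{-n}. -/
/-!
Every point `x` of `A = B(K, r)` has a nearest point `k` of `closure K` with `dist x k ≤ r`,
so `x` lies in the closed ball `B(k, r) ⊆ A`. Sliding a ball of radius `ρ ≤ r` from `x` towards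
`k` along the segment `[x, k]` keeps it inside `B(k, r)` while it still contains `x`. For `ρ`
small, the ball of radius `ρ / 2` obtained this way lies in `A ∩ B(x, ρ)` and has a fraction
`2⁻ⁿ` of the volume of `B(x, ρ)`.
-/

open Metric MeasureTheory Filter
open Module Topology

section Geometry

variable {E : Type*} [NormedAddCommGroup E] [NormedSpace ℝ E]

theorem exists_closedBall_mem_subset_closedBall {x k : E} {r ρ : ℝ} (hx : x ∈ closedBall k r)
    (hr : 0 < r) (hρ : 0 ≤ ρ) (hρr : ρ ≤ r) :
    ∃ c, x ∈ closedBall c ρ ∧ closedBall c ρ ⊆ closedBall k r := by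
  have hxk : dist x k ≤ r := hx
  set t := ρ / r
  have ht₀ : 0 ≤ t := by positivity
  have ht₁ : t ≤ 1 := div_le_one_of_le₀ hρr hr.le
  have htr : t * r = ρ := div_mul_cancel₀ ρ hr.ne'
  refine ⟨AffineMap.lineMap x k t, ?_, closedBall_subset_closedBall' ?_⟩
  · calc dist x (AffineMap.lineMap x k t) = t * dist x k := by
          rw [dist_comm, dist_lineMap_left, Real.norm_of_nonneg ht₀]
      _ ≤ t * r := by gcongr
      _ = ρ := htr
  · calc ρ + dist (AffineMap.lineMap x k t) k = ρ + (1 - t) * dist x k := by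
          rw [dist_lineMap_right, Real.norm_of_nonneg (sub_nonneg.mpr ht₁)]
      _ ≤ ρ + (1 - t) * r := by gcongr
      _ = r := by linarith

theorem exists_closedBall_mem_subset_setOf_infDist_le [ProperSpace E] {K : Set E} {x : E}
    {r ρ : ℝ} (hx : infDist x K ≤ r) (hr : 0 < r) (hρ : 0 ≤ ρ) (hρr : ρ ≤ r) :
    ∃ c, x ∈ closedBall c ρ ∧ closedBall c ρ ⊆ {y | infDist y K ≤ r} := by
  rcases K.eq_empty_or_nonempty with rfl | hK
  · exact ⟨x, mem_closedBall_self hρ, fun y _ ↦ by simpa using hr.le⟩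
  obtain ⟨k, hk, hxk⟩ := exists_mem_closure_infDist_eq_dist hK x
  obtain ⟨c, hxc, hcr⟩ :=
    exists_closedBall_mem_subset_closedBall (mem_closedBall.mpr (hxk ▸ hx)) hr hρ hρr
  refine ⟨c, hxc, hcr.trans fun y hy ↦ ?_⟩
  rw [Set.mem_ofPred_eq, ← infDist_closure]
  exact (infDist_le_dist_of_mem hk).trans hy

end Geometry

section Density

variable {E : Type*} [NormedAddCommGroup E] [NormedSpace ℝ E] [FiniteDimensional ℝ E]
  [MeasurableSpace E] [BorelSpace E] (μ : Measure E) [μ.IsAddHaarMeasure]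

theorem addHaar_closedBall_half (c x : E) {ρ : ℝ} (hρ : 0 ≤ ρ) :
    μ (closedBall c (ρ / 2)) = ENNReal.ofReal (2⁻¹ ^ finrank ℝ E) * μ (closedBall x ρ) := by
  rw [div_eq_inv_mul, Measure.addHaar_closedBall_mul μ c (by norm_num) hρ,
    Measure.addHaar_closedBall_center μ x]

theorem ofReal_inv_two_pow_le_liminf_addHaar_inter_closedBall_div {A : Set E} {x : E}
    (h : ∀ᶠ ρ in 𝓝[>] 0, ∃ c, x ∈ closedBall c (ρ / 2) ∧ closedBall c (ρ / 2) ⊆ A) :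
    ENNReal.ofReal (2⁻¹ ^ finrank ℝ E) ≤
      liminf (fun ρ ↦ μ (A ∩ closedBall x ρ) / μ (closedBall x ρ)) (𝓝[>] 0) := by
  refine le_liminf_of_le (by isBoundedDefault) ?_
  filter_upwards [h, self_mem_nhdsWithin] with ρ ⟨c, hxc, hcA⟩ (hρ : 0 < ρ)
  have hcx : closedBall c (ρ / 2) ⊆ closedBall x ρ :=
    closedBall_subset_closedBall' (by linarith [mem_closedBall'.mp hxc])
  rw [ENNReal.le_div_iff_mul_le (Or.inl (measure_closedBall_pos μ x hρ).ne')
    (Or.inl measure_closedBall_lt_top.ne), ← addHaar_closedBall_half μ c x hρ.le]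
  exact measure_mono (Set.subset_inter hcA hcx)

end Density

theorem stmt_1_general (n : ℕ) (A K : Set (EuclideanSpace ℝ (Fin n))) (r : ℝ) (hr : 0 < r)
    (hAeq : A = {x | Metric.infDist x K ≤ r}) :
    ∀ x ∈ frontier A,
      (∃ s₀ > 0, ∀ s, 0 < s → s ≤ s₀ →
        ∃ c, x ∈ Metric.closedBall c (s / 2) ∧ Metric.closedBall c (s / 2) ⊆ A) ∧
      ENNReal.ofReal ((2 : ℝ)⁻¹ ^ n) ≤
        Filter.liminf
          (fun ρ => volume (A ∩ Metric.closedBall x ρ) / volume (Metric.closedBall x ρ))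
          (nhdsWithin (0 : ℝ) (Set.Ioi 0)) := by
  subst hAeq
  intro x hx
  have hxA : infDist x K ≤ r :=
    (isClosed_le (continuous_infDist_pt K) continuous_const).frontier_subset hx
  have balls : ∀ s, 0 < s → s ≤ 2 * r →
      ∃ c, x ∈ closedBall c (s / 2) ∧ closedBall c (s / 2) ⊆ {y | infDist y K ≤ r} :=
    fun s hs hs₀ ↦ exists_closedBall_mem_subset_setOf_infDist_le hxA hr (by positivity)
      (by linarith)
  refine ⟨⟨2 * r, by positivity, balls⟩, ?_⟩
  have density := ofReal_inv_two_pow_le_liminf_addHaar_inter_closedBall_div volume <| by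
    filter_upwards [Ioo_mem_nhdsGT (by positivity : (0 : ℝ) < 2 * r)] with s hs
    exact balls s hs.1 hs.2.le
  rwa [finrank_euclideanSpace_fin] at density

/-- If a compact set `A ⊆ ℝⁿ` is a tubular neighborhood, i.e. `A = B(K,r)` for a closed
set `K ⊆ A` and `r > 0`, then every boundary point `x ∈ ∂A` lies, for every sufficiently
small `s > 0`, in a closed ball of radius `s/2` contained in `A`, and consequently the
`n`-dimensional lower density of `A` at `x` is at least `2⁻ⁿ`. -/
theorem stmt_1 (n : ℕ) (A K : Set (EuclideanSpace ℝ (Fin n)))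
    (hA : IsCompact A) (hK : IsClosed K) (hKA : K ⊆ A) (r : ℝ) (hr : 0 < r)
    (hAeq : A = {x | Metric.infDist x K ≤ r}) :
    ∀ x ∈ frontier A,
      (∃ s₀ > 0, ∀ s, 0 < s → s ≤ s₀ →
        ∃ c, x ∈ Metric.closedBall c (s / 2) ∧ Metric.closedBall c (s / 2) ⊆ A) ∧
      ENNReal.ofReal ((2 : ℝ)⁻¹ ^ n) ≤
        Filter.liminf
          (fun ρ => volume (A ∩ Metric.closedBall x ρ) / volume (Metric.closedBall x ρ))
          (nhdsWithin (0 : ℝ) (Set.Ioi 0)) :=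
  stmt_1_general n A K r hr hAeq
end

section
/- Let x : [τ₀, τ] → ℝⁿ be Lipschitz with constant C, and let t > τ₀ be such that for all s ∈ [τ₀, τ] one has (t-s)² + |x(τ₀) - x(s)|² ≥ (t - τ₀)². Then C² ≥ 1 + 2(t-s)/(s-τ₀) for all s ∈ (τ₀, min(t,τ)], and hence no such t > τ₀ can exist if t is close enough to τ₀; i.e., the assumption forces t ≤ τ₀. -/
open Set Filter Topology

/-
Comparing the hypothesis at `s` with the Lipschitz bound `‖x τ₀ - x s‖ ≤ C (s - τ₀)` gives
`(t - τ₀)² - (t - s)² = (s - τ₀)(2(t - τ₀) - (s - τ₀)) ≤ C² (s - τ₀)²`, and dividing by `s - τ₀`,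
`2(t - τ₀) ≤ (C² + 1)(s - τ₀)`. This is the claimed bound on `C²`, and letting `s → τ₀⁺`
forces `t ≤ τ₀`.
-/

theorem two_mul_sub_le_of_lipschitzOnWith {E : Type*} [SeminormedAddCommGroup E] {x : ℝ → E}
    {C : NNReal} {S : Set ℝ} (hx : LipschitzOnWith C x S) {τ₀ s t : ℝ} (hτ₀ : τ₀ ∈ S)
    (hs : s ∈ S) (hτ₀s : τ₀ < s) (hdist : (t - τ₀) ^ 2 ≤ (t - s) ^ 2 + ‖x τ₀ - x s‖ ^ 2) :
    2 * (t - τ₀) ≤ ((C : ℝ) ^ 2 + 1) * (s - τ₀) := by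
  have hpos : 0 < s - τ₀ := sub_pos.2 hτ₀s
  have hlip : ‖x τ₀ - x s‖ ≤ C * (s - τ₀) := by
    simpa [← dist_eq_norm, dist_comm τ₀, Real.dist_eq, abs_of_pos hpos] using
      hx.dist_le_mul τ₀ hτ₀ s hs
  have hsq : (s - τ₀) * (2 * (t - τ₀) - (s - τ₀)) ≤ (s - τ₀) * (C ^ 2 * (s - τ₀)) := by
    nlinarith [pow_le_pow_left₀ (norm_nonneg _) hlip 2]
  nlinarith [le_of_mul_le_mul_left hsq hpos]

theorem stmt_3_general (n : ℕ) (τ₀ τ : ℝ) (hττ : τ₀ < τ) (C : NNReal)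
    (x : ℝ → EuclideanSpace ℝ (Fin n))
    (hx : LipschitzOnWith C x (Set.Icc τ₀ τ))
    (t : ℝ) (ht : τ₀ < t)
    (hdist : ∀ s ∈ Set.Icc τ₀ τ,
      (t - τ₀) ^ 2 ≤ (t - s) ^ 2 + ‖x τ₀ - x s‖ ^ 2) :
    (∀ s ∈ Set.Ioc τ₀ (min t τ), 1 + 2 * (t - s) / (s - τ₀) ≤ (C : ℝ) ^ 2) ∧ False := by
  have bound : ∀ s ∈ Ioc τ₀ (min t τ), 2 * (t - τ₀) ≤ ((C : ℝ) ^ 2 + 1) * (s - τ₀) :=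
    fun s hs ↦
      have hsS : s ∈ Icc τ₀ τ := ⟨hs.1.le, hs.2.trans (min_le_right _ _)⟩
      two_mul_sub_le_of_lipschitzOnWith hx (left_mem_Icc.2 hττ.le) hsS hs.1 (hdist s hsS)
  refine ⟨fun s hs ↦ ?_, ?_⟩
  · have hpos : 0 < s - τ₀ := sub_pos.2 hs.1
    rw [add_div' _ _ _ hpos.ne', div_le_iff₀ hpos]
    linarith [bound s hs]
  · have hlim : Tendsto (fun s ↦ ((C : ℝ) ^ 2 + 1) * (s - τ₀)) (𝓝[>] τ₀) (𝓝 0) := by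
      refine tendsto_nhdsWithin_of_tendsto_nhds ?_
      simpa using ((continuous_sub_right τ₀).const_mul ((C : ℝ) ^ 2 + 1)).tendsto τ₀
    have hnonpos : 2 * (t - τ₀) ≤ 0 :=
      ge_of_tendsto hlim (mem_of_superset (Ioc_mem_nhdsGT (lt_min ht hττ)) bound)
    linarith

/-- If `x : [τ₀,τ] → ℝⁿ` is Lipschitz with constant `C` and `t > τ₀` is such that
`(t-s)² + ‖x(τ₀) - x(s)‖² ≥ (t-τ₀)²` for all `s ∈ [τ₀,τ]` (with `τ₀ < τ`), then
`C² ≥ 1 + 2(t-s)/(s-τ₀)` for every `s ∈ (τ₀, min t τ]`; since this is impossible,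
no such `t > τ₀` exists, i.e. the assumptions are contradictory. -/
theorem stmt_3 (n : ℕ) (τ₀ τ : ℝ) (hττ : τ₀ < τ) (C : NNReal) (hC : (0 : ℝ) < C)
    (x : ℝ → EuclideanSpace ℝ (Fin n))
    (hx : LipschitzOnWith C x (Set.Icc τ₀ τ))
    (t : ℝ) (ht : τ₀ < t)
    (hdist : ∀ s ∈ Set.Icc τ₀ τ,
      (t - τ₀) ^ 2 ≤ (t - s) ^ 2 + ‖x τ₀ - x s‖ ^ 2) :
    (∀ s ∈ Set.Ioc τ₀ (min t τ), 1 + 2 * (t - s) / (s - τ₀) ≤ (C : ℝ) ^ 2) ∧ False :=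
  stmt_3_general n τ₀ τ hττ C x hx t ht hdist
end
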